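/- Let μ₁ > 0, μ₃ > 0, μ₄ > 0, U, E, Λ₁ ∈ ℝ^{N×d}, Z, Λ₄ ∈ ℝ^{N×N}, Λ₃ ∈ ℝ^N, S ∈ ℝ^{N×N}, and let 1 ∈ ℝ^N be the all-ones vector. Then the matrix M = μ₁UUᵀ + μ₃11ᵀ + μ₄I is invertible, and the function Y ↦ (μ₁/2)‖U − YU − E‖_F² + (μ₃/2)‖Y1 − 1‖₂² + (μ₄/2)‖Y − S‖_F² + tr(Λ₁ᵀ(U − YU − E)) + Λ₃ᵀ(Y1 − 1) + tr(Λ₄ᵀ(Y − S)) has the unique global minimizer Y = (μ₁(U − E)Uᵀ + μ₃11ᵀ + μ₄S + Λ₁Uᵀ − Λ₃1ᵀ − Λ₄) M⁻¹. -/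
import Mathlib

open Matrix BigOperators

/-- Squared Frobenius norm of a real matrix. -/
noncomputable def frobSq {m n : ℕ} (M : Matrix (Fin m) (Fin n) ℝ) : ℝ :=
  ∑ i, ∑ j, (M i j) ^ 2

lemma frobSq_eq_trace {m n : ℕ} (A : Matrix (Fin m) (Fin n) ℝ) :
    frobSq A = Matrix.trace (Aᵀ * A) := by
  unfold frobSq Matrix.trace
  simp only [Matrix.diag_apply, Matrix.mul_apply, Matrix.transpose_apply, sq]
  exact Finset.sum_comm

lemma trace_t_comm {m n : ℕ} (A B : Matrix (Fin m) (Fin n) ℝ) :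
    Matrix.trace (Bᵀ * A) = Matrix.trace (Aᵀ * B) := by
  rw [← Matrix.trace_transpose (Bᵀ * A), Matrix.transpose_mul, Matrix.transpose_transpose]

lemma frobSq_sub {m n : ℕ} (A B : Matrix (Fin m) (Fin n) ℝ) :
    frobSq (A - B) = frobSq A - 2 * Matrix.trace (Aᵀ * B) + frobSq B := by
  simp only [frobSq_eq_trace, Matrix.transpose_sub, Matrix.sub_mul, Matrix.mul_sub,
    Matrix.trace_sub]
  rw [trace_t_comm A B]; ring

lemma frobSq_add {m n : ℕ} (A B : Matrix (Fin m) (Fin n) ℝ) :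
    frobSq (A + B) = frobSq A + 2 * Matrix.trace (Aᵀ * B) + frobSq B := by
  simp only [frobSq_eq_trace, Matrix.transpose_add, Matrix.add_mul, Matrix.mul_add,
    Matrix.trace_add]
  rw [trace_t_comm A B]; ring

lemma frobSq_nonneg {m n : ℕ} (A : Matrix (Fin m) (Fin n) ℝ) : 0 ≤ frobSq A :=
  Finset.sum_nonneg fun _ _ => Finset.sum_nonneg fun _ _ => sq_nonneg _

lemma frobSq_pos {m n : ℕ} {A : Matrix (Fin m) (Fin n) ℝ} (h : A ≠ 0) : 0 < frobSq A := by
  rcases lt_or_eq_of_le (frobSq_nonneg A) with h' | h'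
  · exact h'
  · exfalso; apply h
    ext i j
    have h0 : ∀ i ∈ Finset.univ, (0:ℝ) ≤ ∑ j, (A i j)^2 :=
      fun _ _ => Finset.sum_nonneg fun _ _ => sq_nonneg _
    have := (Finset.sum_eq_zero_iff_of_nonneg h0).mp h'.symm i (Finset.mem_univ i)
    have := (Finset.sum_eq_zero_iff_of_nonneg (fun j _ => sq_nonneg (A i j))).mp this j
      (Finset.mem_univ j)
    simpa [sq] using pow_eq_zero_iff (n := 2) (by norm_num) |>.mp this

lemma sumSq_eq_dot {n : ℕ} (v : Fin n → ℝ) : ∑ i, (v i)^2 = v ⬝ᵥ v := by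
  simp [dotProduct, sq]

lemma dot_self_nonneg' {n : ℕ} (v : Fin n → ℝ) : 0 ≤ v ⬝ᵥ v :=
  Finset.sum_nonneg fun _ _ => mul_self_nonneg _

lemma tr1 {N d : ℕ} (A U : Matrix (Fin N) (Fin d) ℝ) (D : Matrix (Fin N) (Fin N) ℝ) :
    Matrix.trace (Aᵀ * (D * U)) = Matrix.trace ((A * Uᵀ)ᵀ * D) := by
  rw [Matrix.transpose_mul, Matrix.transpose_transpose, ← Matrix.mul_assoc,
    Matrix.trace_mul_comm, Matrix.mul_assoc, ← Matrix.mul_assoc]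

lemma dotOuter {N : ℕ} (v : Fin N → ℝ) (D : Matrix (Fin N) (Fin N) ℝ) :
    v ⬝ᵥ (D *ᵥ (fun _ => (1:ℝ))) = Matrix.trace ((Matrix.of fun i (_ : Fin N) => v i)ᵀ * D) := by
  simp only [Matrix.trace, Matrix.diag_apply, Matrix.mul_apply, Matrix.transpose_apply,
    Matrix.of_apply, dotProduct, Matrix.mulVec, mul_one, Finset.mul_sum]
  exact Finset.sum_comm

lemma dot_expand {n : ℕ} (a b : Fin n → ℝ) :
    (a + b) ⬝ᵥ (a + b) = a ⬝ᵥ a + 2*(a ⬝ᵥ b) + b ⬝ᵥ b := by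
  simp only [add_dotProduct, dotProduct_add]
  rw [dotProduct_comm b a]; ring

/-- Y-update of the full DoT ADMM scheme: with `μ₁, μ₃, μ₄ > 0`, the matrix
`M = μ₁UUᵀ + μ₃𝟙𝟙ᵀ + μ₄I` is invertible and the function
`Y ↦ (μ₁/2)‖U − YU − E‖_F² + (μ₃/2)‖Y𝟙 − 𝟙‖₂² + (μ₄/2)‖Y − S‖_F²
     + tr(Λ₁ᵀ(U − YU − E)) + Λ₃ᵀ(Y𝟙 − 𝟙) + tr(Λ₄ᵀ(Y − S))`
has the unique global minimizer
`Y = (μ₁(U − E)Uᵀ + μ₃𝟙𝟙ᵀ + μ₄S + Λ₁Uᵀ − Λ₃𝟙ᵀ − Λ₄) M⁻¹`. -/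
theorem stmt12 {N d : ℕ} (μ₁ μ₃ μ₄ : ℝ) (hμ₁ : 0 < μ₁) (hμ₃ : 0 < μ₃) (hμ₄ : 0 < μ₄)
    (U E Λ₁ : Matrix (Fin N) (Fin d) ℝ) (Z Λ₄ S : Matrix (Fin N) (Fin N) ℝ)
    (Λ₃ : Fin N → ℝ) (hS : S = Z - Matrix.diagonal (fun i => Z i i)) :
    let ones : Fin N → ℝ := fun _ => 1
    let onesMat : Matrix (Fin N) (Fin N) ℝ := Matrix.of fun _ _ => (1 : ℝ)
    let M : Matrix (Fin N) (Fin N) ℝ :=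
      μ₁ • (U * Uᵀ) + μ₃ • onesMat + μ₄ • (1 : Matrix (Fin N) (Fin N) ℝ)
    let f : Matrix (Fin N) (Fin N) ℝ → ℝ := fun Y =>
      (μ₁ / 2) * frobSq (U - Y * U - E)
        + (μ₃ / 2) * (∑ i, ((Y *ᵥ ones - ones) i) ^ 2)
        + (μ₄ / 2) * frobSq (Y - S)
        + Matrix.trace (Λ₁ᵀ * (U - Y * U - E))
        + Λ₃ ⬝ᵥ (Y *ᵥ ones - ones)
        + Matrix.trace (Λ₄ᵀ * (Y - S))
    let Ystar : Matrix (Fin N) (Fin N) ℝ :=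
      (μ₁ • ((U - E) * Uᵀ) + μ₃ • onesMat + μ₄ • S + Λ₁ * Uᵀ
          - Matrix.of (fun i _ => Λ₃ i) - Λ₄) * M⁻¹
    IsUnit M ∧ ∀ Y : Matrix (Fin N) (Fin N) ℝ, Y ≠ Ystar → f Ystar < f Y := by
  intro ones onesMat M f Ystar
  -- determinant nonzero
  have hdet : M.det ≠ 0 := by
    have hquad : ∀ v : Fin N → ℝ, v ⬝ᵥ (M *ᵥ v) =
        μ₁ * ((Uᵀ *ᵥ v) ⬝ᵥ (Uᵀ *ᵥ v)) + μ₃ * (∑ i, v i)^2 + μ₄ * (v ⬝ᵥ v) := by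
      intro v
      have h1 : v ⬝ᵥ ((U * Uᵀ) *ᵥ v) = (Uᵀ *ᵥ v) ⬝ᵥ (Uᵀ *ᵥ v) := by
        rw [← Matrix.mulVec_mulVec, dotProduct_mulVec, ← Matrix.mulVec_transpose]
      have h2 : v ⬝ᵥ (onesMat *ᵥ v) = (∑ i, v i)^2 := by
        simp only [Matrix.mulVec, dotProduct, onesMat, Matrix.of_apply, one_mul]
        rw [← Finset.sum_mul, sq]
      simp only [M, Matrix.add_mulVec, Matrix.smul_mulVec, dotProduct_add,
        dotProduct_smul, Matrix.one_mulVec, smul_eq_mul, h1, h2]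
    intro hdet
    obtain ⟨v, hv0, hv⟩ := (Matrix.exists_mulVec_eq_zero_iff).mpr hdet
    have hq := hquad v
    rw [hv, dotProduct_zero] at hq
    have n1 : 0 ≤ (Uᵀ *ᵥ v) ⬝ᵥ (Uᵀ *ᵥ v) := dot_self_nonneg' _
    have n2 : 0 ≤ v ⬝ᵥ v := dot_self_nonneg' _
    have : v ⬝ᵥ v = 0 := by nlinarith [sq_nonneg (∑ i, v i)]
    exact hv0 (dotProduct_self_eq_zero.mp this)
  have hMunit : IsUnit M := (Matrix.isUnit_iff_isUnit_det M).mpr (isUnit_iff_ne_zero.mpr hdet)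
  refine ⟨hMunit, ?_⟩
  -- Ystar * M = B
  have hYM : Ystar * M = μ₁ • ((U - E) * Uᵀ) + μ₃ • onesMat + μ₄ • S + Λ₁ * Uᵀ
      - Matrix.of (fun i _ => Λ₃ i) - Λ₄ := by
    show (μ₁ • ((U - E) * Uᵀ) + μ₃ • onesMat + μ₄ • S + Λ₁ * Uᵀ
          - Matrix.of (fun i _ => Λ₃ i) - Λ₄) * M⁻¹ * M = _
    rw [Matrix.mul_assoc, Matrix.nonsing_inv_mul M (isUnit_iff_ne_zero.mpr hdet),
      Matrix.mul_one]
  -- vanishing of the linear part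
  have hG : -(μ₁ • ((U - Ystar * U - E) * Uᵀ)) + μ₃ • (Ystar * onesMat - onesMat)
      + μ₄ • (Ystar - S) - Λ₁ * Uᵀ + (Matrix.of fun i (_ : Fin N) => Λ₃ i) + Λ₄ = 0 := by
    have expand : -(μ₁ • ((U - Ystar * U - E) * Uᵀ)) + μ₃ • (Ystar * onesMat - onesMat)
        + μ₄ • (Ystar - S) - Λ₁ * Uᵀ + (Matrix.of fun i (_ : Fin N) => Λ₃ i) + Λ₄
        = Ystar * M - (μ₁ • ((U - E) * Uᵀ) + μ₃ • onesMat + μ₄ • S + Λ₁ * Uᵀ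
          - Matrix.of (fun i _ => Λ₃ i) - Λ₄) := by
      simp only [M, Matrix.mul_add, Matrix.mul_smul, Matrix.mul_one, Matrix.sub_mul,
        smul_sub, ← Matrix.mul_assoc]
      module
    rw [expand, hYM, sub_self]
  have houter : (Matrix.of fun i (_ : Fin N) => (Ystar *ᵥ ones - ones) i)
      = Ystar * onesMat - onesMat := by
    ext i j
    simp [Matrix.mulVec, Matrix.mul_apply, onesMat, dotProduct, ones]
  -- key identity
  have key : ∀ D : Matrix (Fin N) (Fin N) ℝ, f (Ystar + D) =
      f Ystar + ((μ₁/2) * frobSq (D * U) + (μ₃/2) * ((D *ᵥ ones) ⬝ᵥ (D *ᵥ ones))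
        + (μ₄/2) * frobSq D) := by
    intro D
    have e1 : U - (Ystar + D) * U - E = (U - Ystar * U - E) - D * U := by
      rw [Matrix.add_mul]; abel
    have e2 : (Ystar + D) *ᵥ ones - ones = (Ystar *ᵥ ones - ones) + D *ᵥ ones := by
      rw [Matrix.add_mulVec]; abel
    have e3 : Ystar + D - S = (Ystar - S) + D := by abel
    -- linear part vanishes
    have hL : -(μ₁ * Matrix.trace ((U - Ystar * U - E)ᵀ * (D * U)))
        + μ₃ * ((Ystar *ᵥ ones - ones) ⬝ᵥ (D *ᵥ ones))
        + μ₄ * Matrix.trace ((Ystar - S)ᵀ * D)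
        - Matrix.trace (Λ₁ᵀ * (D * U))
        + Λ₃ ⬝ᵥ (D *ᵥ ones)
        + Matrix.trace (Λ₄ᵀ * D) = 0 := by
      have c1 := tr1 (U - Ystar * U - E) U D
      have c2 := tr1 Λ₁ U D
      have c3 : (Ystar *ᵥ ones - ones) ⬝ᵥ (D *ᵥ ones)
          = Matrix.trace ((Ystar * onesMat - onesMat)ᵀ * D) := by
        rw [← houter]; exact dotOuter _ D
      have c4 : Λ₃ ⬝ᵥ (D *ᵥ ones) = Matrix.trace ((Matrix.of fun i (_ : Fin N) => Λ₃ i)ᵀ * D) :=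
        dotOuter _ D
      have zero := congrArg (fun X => Matrix.trace (Xᵀ * D)) hG
      simp only [Matrix.transpose_add, Matrix.transpose_sub, Matrix.transpose_smul,
        Matrix.transpose_neg, Matrix.add_mul, Matrix.sub_mul, Matrix.neg_mul,
        Matrix.smul_mul, Matrix.trace_add, Matrix.trace_sub, Matrix.trace_neg,
        Matrix.trace_smul, Matrix.transpose_zero, Matrix.zero_mul, Matrix.trace_zero,
        smul_eq_mul] at zero
      rw [c1, c2, c3, c4]
      simp only [Matrix.transpose_add, Matrix.transpose_sub, Matrix.transpose_smul,
        Matrix.transpose_neg, Matrix.add_mul, Matrix.sub_mul, Matrix.neg_mul,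
        Matrix.smul_mul, Matrix.trace_add, Matrix.trace_sub, Matrix.trace_neg,
        Matrix.trace_smul, smul_eq_mul]
      linarith [zero]
    simp only [f, e1, e2, e3]
    rw [frobSq_sub, frobSq_add, sumSq_eq_dot, sumSq_eq_dot, dot_expand]
    simp only [Matrix.mul_sub, Matrix.mul_add, Matrix.trace_sub, Matrix.trace_add,
      dotProduct_add]
    linarith [hL]
  -- conclude
  intro Y hY
  have hD : Y - Ystar ≠ 0 := sub_ne_zero.mpr hY
  have hk := key (Y - Ystar)
  rw [add_sub_cancel] at hk
  rw [hk]
  have p1 : 0 ≤ frobSq ((Y - Ystar) * U) := frobSq_nonneg _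
  have p2 : 0 ≤ ((Y - Ystar) *ᵥ ones) ⬝ᵥ ((Y - Ystar) *ᵥ ones) := dot_self_nonneg' _
  have p3 : 0 < frobSq (Y - Ystar) := frobSq_pos hD
  nlinarith
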